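/- arXiv:2306.17009 — 3 statements merged into one kernel-verified Lean document; each statement's English description precedes it below -/
import Mathlib

section
/- Coparameterized Bayesian updates compose optically (existence): let A, B, C, M, N be finite types, γ : A → Dist(M × B) and δ : B → Dist(N × C) channels, and π a distribution on A. Write p_B(b) = ∑_{a,m} π a · γ a (m,b) and p_C(c) = ∑_{b,n} p_B(b) · δ b (n,c). Suppose ρ : B → Dist(A × M) is a Bayesian inversion of γ with respect to π (i.e. π a · γ a (m,b) = p_B(b) · ρ b (a,m) for all a, m, b), and δ† : C → Dist(B × N) is a Bayesian inversion of δ with respect to p_B (i.e. p_B(b) · δ b (n,c) = p_C(c) · δ† c (b,n) for all b, n, c). Define the copy-composite channel (δ ∘² γ) : A → Dist((M × B × N) × C) by (δ ∘² γ) a ((m,b,n), c) = γ a (m,b) · δ b (n,c), and the copy-composite inversion σ : C → Dist(A × (M × B × N)) by σ c (a,(m,b,n)) = δ† c (b,n) · ρ b (a,m). Then σ is a Bayesian inversion of δ ∘² γ with respect to π: for all a, m, b, n, c, π a · γ a (m,b) · δ b (n,c) = p_C(c) · δ† c (b,n) · ρ b (a,m). -/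
open scoped BigOperators

/-- The pushforward `p_B` of a prior `π` on `A` along a coparameterized channel
`γ : A → Dist (M × B)`, discarding the coparameter: `p_B b = ∑ a m, π a * γ a (m, b)`. -/
noncomputable def pushB {A B M : Type*} [Fintype A] [Fintype M]
    (π : A → ℝ) (γ : A → M × B → ℝ) (b : B) : ℝ :=
  ∑ a, ∑ m, π a * γ a (m, b)

/-- The pushforward `p_C` of `p_B` along `δ : B → Dist (N × C)`:
`p_C c = ∑ b n, p_B b * δ b (n, c)`. -/
noncomputable def pushC {A B C M N : Type*} [Fintype A] [Fintype B] [Fintype M] [Fintype N]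
    (π : A → ℝ) (γ : A → M × B → ℝ) (δ : B → N × C → ℝ) (c : C) : ℝ :=
  ∑ b, ∑ n, pushB π γ b * δ b (n, c)

/-- **Coparameterized Bayesian updates compose optically (existence).**
If `ρ` is a Bayesian inversion of `γ` with respect to `π`, and `δ†` is a Bayesian
inversion of `δ` with respect to the pushforward `p_B`, then the copy-composite
`σ c (a,(m,b,n)) = δ† c (b,n) * ρ b (a,m)` is a Bayesian inversion of the
copy-composite channel `(δ ∘² γ) a ((m,b,n),c) = γ a (m,b) * δ b (n,c)` with
respect to `π`. -/
theorem coparameterized_bayes_compose_optically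
    {A B C M N : Type*} [Fintype A] [Fintype B] [Fintype C] [Fintype M] [Fintype N]
    (π : A → ℝ) (γ : A → M × B → ℝ) (δ : B → N × C → ℝ)
    (ρ : B → A × M → ℝ) (δd : C → B × N → ℝ)
    (hπ₀ : ∀ a, 0 ≤ π a) (hπ₁ : ∑ a, π a = 1)
    (hγ₀ : ∀ a mb, 0 ≤ γ a mb) (hγ₁ : ∀ a, ∑ mb, γ a mb = 1)
    (hδ₀ : ∀ b nc, 0 ≤ δ b nc) (hδ₁ : ∀ b, ∑ nc, δ b nc = 1)
    (hρ₀ : ∀ b am, 0 ≤ ρ b am) (hρ₁ : ∀ b, ∑ am, ρ b am = 1)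
    (hδd₀ : ∀ c bn, 0 ≤ δd c bn) (hδd₁ : ∀ c, ∑ bn, δd c bn = 1)
    (hρ : ∀ (a : A) (m : M) (b : B),
      π a * γ a (m, b) = pushB π γ b * ρ b (a, m))
    (hδd : ∀ (b : B) (n : N) (c : C),
      pushB π γ b * δ b (n, c) = pushC π γ δ c * δd c (b, n)) :
    ∀ (a : A) (m : M) (b : B) (n : N) (c : C),
      π a * (γ a (m, b) * δ b (n, c))
        = pushC π γ δ c * (δd c (b, n) * ρ b (a, m)) := by
  intro a m b n c
  have h1 := hρ a m b
  have h2 := hδd b n c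
  linear_combination δ b (n, c) * h1 + ρ b (a, m) * h2
end

section
/- The relative entropy is strictly functorial for lens composition (composition part of the statement that KL is a strict loss model): let X, Y, Z be finite types, π a distribution on X with π x > 0 for all x, and c : X → Dist Y, d : Y → Dist Z channels with c x y > 0 and d y z > 0 for all x, y, z. Let c' : Y → Dist X and d' : Z → Dist Y be arbitrary channels (approximate inverses). Define the exact inversions c†(y)(x) = π x · c x y / (c∙π)(y) and d†(z)(y) = (c∙π)(y) · d y z / (d∙(c∙π))(z), the exact inversion of the copy-composite (d ∘² c)†(z)(x,y) = π x · c x y · d y z / (d∙(c∙π))(z) (a distribution on X × Y), and the copy-composite approximate inverse ρ(z)(x,y) = d'(z)(y) · c'(y)(x). Then for every z: D(ρ(z), (d ∘² c)†(z)) = D(d'(z), d†(z)) + ∑_y d'(z)(y) · D(c'(y), c†(y)). -/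
open scoped BigOperators

/-- The relative entropy (Kullback–Leibler divergence) between two distributions on a
finite type, `D(p,q) = ∑ z, p z * log (p z / q z)`. -/
noncomputable def relEnt {Z : Type*} [Fintype Z] (p q : Z → ℝ) : ℝ :=
  ∑ z, p z * Real.log (p z / q z)

/-- The pushforward of a prior `π` along a channel `c`: `(c∙π) y = ∑ x, π x * c x y`. -/
noncomputable def push {X Y : Type*} [Fintype X] (π : X → ℝ) (c : X → Y → ℝ) (y : Y) : ℝ :=
  ∑ x, π x * c x y

/-!
The exact inversion of the copy-composite factors as `(d ∘² c)† z (x, y) = d† z y * c† y x`,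
and the approximate inverse `ρ z` factors in the same way, so the identity is the chain rule
for relative entropy on `X × Y`: the logarithm of a product of ratios splits into a sum,
and summing out `x` with `∑ x, c' y x = 1` leaves `D(d' z, d† z)`.
-/

open Finset

theorem relEnt_chain_rule {X Y : Type*} [Fintype X] [Fintype Y]
    (a A : Y → ℝ) (b B : Y → X → ℝ) (hb : ∀ y, ∑ x, b y x = 1)
    (hA : ∀ y, A y ≠ 0) (hB : ∀ y x, B y x ≠ 0) :
    relEnt (fun xy : X × Y => a xy.2 * b xy.2 xy.1) (fun xy => A xy.2 * B xy.2 xy.1)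
      = relEnt a A + ∑ y, a y * relEnt (b y) (B y) := by
  simp only [relEnt]
  rw [Fintype.sum_prod_type_right, ← sum_add_distrib]
  refine sum_congr rfl fun y _ => ?_
  have hmarg : a y * Real.log (a y / A y) = ∑ x, a y * b y x * Real.log (a y / A y) := by
    rw [← sum_mul, ← mul_sum, hb y, mul_one]
  rw [hmarg, mul_sum, ← sum_add_distrib]
  refine sum_congr rfl fun x _ => ?_
  rcases eq_or_ne (a y) 0 with ha | ha
  · simp [ha]
  rcases eq_or_ne (b y x) 0 with hbx | hbx
  · simp [hbx]
  rw [mul_div_mul_comm, Real.log_mul (div_ne_zero ha (hA y)) (div_ne_zero hbx (hB y x))]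
  ring

theorem push_pos {X Y : Type*} [Fintype X] [Nonempty X] {π : X → ℝ} {c : X → Y → ℝ} {y : Y}
    (hπ : ∀ x, 0 < π x) (hc : ∀ x, 0 < c x y) : 0 < push π c y :=
  sum_pos (fun x _ => mul_pos (hπ x) (hc x)) univ_nonempty

theorem nonempty_of_sum_eq_one {X : Type*} [Fintype X] {p : X → ℝ} (hp : ∑ x, p x = 1) :
    Nonempty X :=
  univ_nonempty_iff.mp (nonempty_of_sum_ne_zero (hp ▸ one_ne_zero))

theorem relEnt_strict_loss_model_comp_general
    {X Y Z : Type*} [Fintype X] [Fintype Y] [Fintype Z]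
    (π : X → ℝ) (c : X → Y → ℝ) (d : Y → Z → ℝ)
    (c' : Y → X → ℝ) (d' : Z → Y → ℝ)
    (hπ : ∀ x, 0 < π x)
    (hc : ∀ x y, 0 < c x y)
    (hd : ∀ y z, 0 < d y z)
    (hc'₁ : ∀ y, ∑ x, c' y x = 1)
    (hd'₁ : ∀ z, ∑ y, d' z y = 1) :
    ∀ z : Z,
      relEnt
          (fun xy : X × Y => d' z xy.2 * c' xy.2 xy.1)
          (fun xy : X × Y =>
            π xy.1 * c xy.1 xy.2 * d xy.2 z / push (push π c) d z)
        = relEnt (d' z)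
            (fun y => push π c y * d y z / push (push π c) d z)
          + ∑ y, d' z y * relEnt (c' y) (fun x => π x * c x y / push π c y) := by
  intro z
  have hQ : ∀ y, 0 < push π c y := fun y =>
    have := nonempty_of_sum_eq_one (hc'₁ y)
    push_pos hπ (hc · y)
  have hP : 0 < push (push π c) d z :=
    have := nonempty_of_sum_eq_one (hd'₁ z)
    push_pos hQ (hd · z)
  have hfactor : (fun xy : X × Y => π xy.1 * c xy.1 xy.2 * d xy.2 z / push (push π c) d z)
      = fun xy => push π c xy.2 * d xy.2 z / push (push π c) d z
          * (π xy.1 * c xy.1 xy.2 / push π c xy.2) := by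
    funext xy
    field_simp [(hQ xy.2).ne']
  rw [hfactor]
  exact relEnt_chain_rule _ _ _ _ hc'₁
    (fun y => (div_pos (mul_pos (hQ y) (hd y z)) hP).ne')
    (fun y x => (div_pos (mul_pos (hπ x) (hc x y)) (hQ y)).ne')

/-- **The relative entropy is strictly functorial for lens composition** (composition
part of the statement that `KL` is a strict loss model): the divergence from the
copy-composite of the approximate inverses to the exact inversion of the
copy-composite is the lens-composite of the divergences,
`D(ρ z, (d ∘² c)† z) = D(d' z, d† z) + ∑ y, d' z y * D(c' y, c† y)`. -/
theorem relEnt_strict_loss_model_comp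
    {X Y Z : Type*} [Fintype X] [Fintype Y] [Fintype Z]
    (π : X → ℝ) (c : X → Y → ℝ) (d : Y → Z → ℝ)
    (c' : Y → X → ℝ) (d' : Z → Y → ℝ)
    (hπ : ∀ x, 0 < π x) (hπ₁ : ∑ x, π x = 1)
    (hc : ∀ x y, 0 < c x y) (hc₁ : ∀ x, ∑ y, c x y = 1)
    (hd : ∀ y z, 0 < d y z) (hd₁ : ∀ y, ∑ z, d y z = 1)
    (hc'₀ : ∀ y x, 0 ≤ c' y x) (hc'₁ : ∀ y, ∑ x, c' y x = 1)
    (hd'₀ : ∀ z y, 0 ≤ d' z y) (hd'₁ : ∀ z, ∑ y, d' z y = 1) :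
    ∀ z : Z,
      relEnt
          (fun xy : X × Y => d' z xy.2 * c' xy.2 xy.1)
          (fun xy : X × Y =>
            π xy.1 * c xy.1 xy.2 * d xy.2 z / push (push π c) d z)
        = relEnt (d' z)
            (fun y => push π c y * d y z / push (push π c) d z)
          + ∑ y, d' z y * relEnt (c' y) (fun x => π x * c x y / push π c y) :=
  relEnt_strict_loss_model_comp_general π c d c' d' hπ hc hd hc'₁ hd'₁
end

section
/- Laxator of the relative entropy loss model: let X, X', M, M', Y, Y' be finite types, ω a distribution on X × X' with ω(x,x') > 0 for all x, x', with marginals ω_X and ω_{X'}, and let c : X → Dist(M × Y) and d : X' → Dist(M' × Y') be channels with c x (m,y) > 0 and d x' (m',y') > 0 everywhere. Let c' : Y → Dist(X × M) and d' : Y' → Dist(X' × M') be arbitrary channels (approximate inverses). Define p_c(y) = ∑_{x,m} ω_X(x) · c x (m,y), c†(y)(x,m) = ω_X(x) · c x (m,y) / p_c(y), and analogously p_d, d†; define the tensor channel (c ⊗ d)(x,x')((m,m'),(y,y')) = c x (m,y) · d x' (m',y'), its pushforward p_{cd}(y,y') = ∑_{x,x',m,m'} ω(x,x') · c x (m,y)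 · d x' (m',y'), and its exact inversion (c ⊗ d)†(y,y')((x,m),(x',m')) = ω(x,x') · c x (m,y) · d x' (m',y') / p_{cd}(y,y'); and define the product approximate inverse (c' ⊗ d')(y,y')((x,m),(x',m')) = c'(y)(x,m) · d'(y')(x',m'). Then for all y, y': D((c' ⊗ d')(y,y'), (c ⊗ d)†(y,y')) = D(c'(y), c†(y)) + D(d'(y'), d†(y')) + λ, where λ = ∑_{x,m,x',m'} c'(y)(x,m) · d'(y')(x',m') · log( ω_X(x) · ω_{X'}(x') / ω(x,x') ) + log( p_{cd}(y,y') / (p_c(y) · p_d(y')) ). -/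
open scoped BigOperators

/-- First marginal of a joint distribution on `X × X'`. -/
noncomputable def margL {X X' : Type*} [Fintype X'] (ω : X × X' → ℝ) (x : X) : ℝ :=
  ∑ x', ω (x, x')

/-- Second marginal of a joint distribution on `X × X'`. -/
noncomputable def margR {X X' : Type*} [Fintype X] (ω : X × X' → ℝ) (x' : X') : ℝ :=
  ∑ x, ω (x, x')

/-- Pushforward of a prior along a coparameterized channel, discarding the
coparameter: `p_c(y) = ∑ x m, π x * c x (m, y)`. -/
noncomputable def pushCo {X M Y : Type*} [Fintype X] [Fintype M]
    (π : X → ℝ) (c : X → M × Y → ℝ) (y : Y) : ℝ :=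
  ∑ x, ∑ m, π x * c x (m, y)

/-- Exact (coparameterized) Bayesian inversion: `c†(y)(x,m) = π x * c x (m,y) / p_c(y)`. -/
noncomputable def exactInv {X M Y : Type*} [Fintype X] [Fintype M]
    (π : X → ℝ) (c : X → M × Y → ℝ) (y : Y) (xm : X × M) : ℝ :=
  π xm.1 * c xm.1 (xm.2, y) / pushCo π c y

/-- Pushforward of a joint prior `ω` along the tensor of two coparameterized channels. -/
noncomputable def pushTensor {X X' M M' Y Y' : Type*}
    [Fintype X] [Fintype X'] [Fintype M] [Fintype M']
    (ω : X × X' → ℝ) (c : X → M × Y → ℝ) (d : X' → M' × Y' → ℝ) (y : Y) (y' : Y') : ℝ :=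
  ∑ x, ∑ x', ∑ m, ∑ m', ω (x, x') * c x (m, y) * d x' (m', y')


/-!
Write `q = (c ⊗ d)†(y,y')`, `q₁ = c†(y)` and `q₂ = d†(y')`. Wherever `a = c'(y)(x,m)` and
`b = d'(y')(x',m')` are nonzero, the log-ratio splits as
`log (a b / q) = log (a / q₁) + log (b / q₂) + log (q₁ q₂ / q)`, and since `c'(y)` and `d'(y')`
are normalized the first two terms integrate to `D(c'(y), q₁)` and `D(d'(y'), q₂)`. In the last
term the channel values cancel:
`q₁ q₂ / q = (ω_X(x) ω_{X'}(x') / ω(x,x')) · (p_{cd}(y,y') / (p_c(y) p_d(y')))`,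
and the second factor is constant, which gives `λ`.
-/

open Finset Real

section RelEnt

variable {Z Z' : Type*} [Fintype Z] [Fintype Z']

lemma mul_mul_log_mul_div {a b q q₁ q₂ : ℝ} (hq : q ≠ 0) (hq₁ : q₁ ≠ 0) (hq₂ : q₂ ≠ 0) :
    a * b * log (a * b / q)
      = b * (a * log (a / q₁)) + a * (b * log (b / q₂)) + a * b * log (q₁ * q₂ / q) := by
  rcases eq_or_ne a 0 with rfl | ha
  · simp
  rcases eq_or_ne b 0 with rfl | hb
  · simp
  have hsplit : a * b / q = a / q₁ * (b / q₂) * (q₁ * q₂ / q) := by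
    field_simp
  rw [hsplit, log_mul (by positivity) (by positivity), log_mul (by positivity) (by positivity)]
  ring

lemma nonempty_of_sum_eq_one_s9 {p : Z → ℝ} (hp : ∑ z, p z = 1) : Nonempty Z :=
  univ_nonempty_iff.mp (nonempty_of_sum_ne_zero (hp ▸ one_ne_zero))

lemma sum_prod_mul_of_sum_eq_one {p : Z → ℝ} {p' : Z' → ℝ} (hp : ∑ z, p z = 1)
    (hp' : ∑ z', p' z' = 1) : ∑ z : Z × Z', p z.1 * p' z.2 = 1 := by
  rw [Fintype.sum_prod_type, ← sum_mul_sum, hp, hp', one_mul]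

lemma relEnt_prod_eq_add {p : Z → ℝ} {p' : Z' → ℝ} {q : Z × Z' → ℝ} {q₁ : Z → ℝ}
    {q₂ : Z' → ℝ} (hp : ∑ z, p z = 1) (hp' : ∑ z', p' z' = 1) (hq : ∀ z, q z ≠ 0)
    (hq₁ : ∀ z, q₁ z ≠ 0) (hq₂ : ∀ z', q₂ z' ≠ 0) :
    relEnt (fun z : Z × Z' => p z.1 * p' z.2) q
      = relEnt p q₁ + relEnt p' q₂
        + ∑ z : Z × Z', p z.1 * p' z.2 * log (q₁ z.1 * q₂ z.2 / q z) := by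
  unfold relEnt
  rw [sum_congr rfl fun z _ => mul_mul_log_mul_div (hq z) (hq₁ z.1) (hq₂ z.2),
    sum_add_distrib, sum_add_distrib, Fintype.sum_prod_type, Fintype.sum_prod_type]
  simp only [← sum_mul, ← mul_sum, hp, hp', one_mul]

end RelEnt

section Channels

variable {X X' M M' Y Y' : Type*}

lemma margL_pos [Fintype X'] [Nonempty X'] {ω : X × X' → ℝ} (hω : ∀ p, 0 < ω p) (x : X) :
    0 < margL ω x :=
  sum_pos (fun _ _ => hω _) univ_nonempty

lemma margR_pos [Fintype X] [Nonempty X] {ω : X × X' → ℝ} (hω : ∀ p, 0 < ω p) (x' : X') :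
    0 < margR ω x' :=
  sum_pos (fun _ _ => hω _) univ_nonempty

lemma pushCo_pos [Fintype X] [Fintype M] [Nonempty X] [Nonempty M]
    {w : X → ℝ} {c : X → M × Y → ℝ}
    (hw : ∀ x, 0 < w x) (hc : ∀ x my, 0 < c x my) (y : Y) : 0 < pushCo w c y :=
  sum_pos (fun _ _ => sum_pos (fun _ _ => mul_pos (hw _) (hc _ _)) univ_nonempty)
    univ_nonempty

lemma exactInv_pos [Fintype X] [Fintype M] [Nonempty X] [Nonempty M]
    {w : X → ℝ} {c : X → M × Y → ℝ}
    (hw : ∀ x, 0 < w x) (hc : ∀ x my, 0 < c x my) (y : Y) (xm : X × M) :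
    0 < exactInv w c y xm :=
  div_pos (mul_pos (hw _) (hc _ _)) (pushCo_pos hw hc y)

lemma pushTensor_pos [Fintype X] [Fintype X'] [Fintype M] [Fintype M']
    [Nonempty X] [Nonempty X'] [Nonempty M] [Nonempty M']
    {ω : X × X' → ℝ} {c : X → M × Y → ℝ} {d : X' → M' × Y' → ℝ} (hω : ∀ p, 0 < ω p)
    (hc : ∀ x my, 0 < c x my) (hd : ∀ x' my, 0 < d x' my) (y : Y) (y' : Y') :
    0 < pushTensor ω c d y y' :=
  sum_pos (fun _ _ => sum_pos (fun _ _ => sum_pos (fun _ _ => sum_pos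
    (fun _ _ => mul_pos (mul_pos (hω _) (hc _ _)) (hd _ _)) univ_nonempty) univ_nonempty)
    univ_nonempty) univ_nonempty

lemma log_exactInv_mul_exactInv_div [Fintype X] [Fintype X'] [Fintype M] [Fintype M']
    [Nonempty X] [Nonempty X'] [Nonempty M] [Nonempty M']
    {ω : X × X' → ℝ} {c : X → M × Y → ℝ} {d : X' → M' × Y' → ℝ} (hω : ∀ p, 0 < ω p)
    (hc : ∀ x my, 0 < c x my) (hd : ∀ x' my, 0 < d x' my) (y : Y) (y' : Y')
    (xm : X × M) (xm' : X' × M') :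
    log (exactInv (margL ω) c y xm * exactInv (margR ω) d y' xm'
        / (ω (xm.1, xm'.1) * c xm.1 (xm.2, y) * d xm'.1 (xm'.2, y') / pushTensor ω c d y y'))
      = log (margL ω xm.1 * margR ω xm'.1 / ω (xm.1, xm'.1))
        + log (pushTensor ω c d y y' / (pushCo (margL ω) c y * pushCo (margR ω) d y')) := by
  have hL := margL_pos hω xm.1
  have hR := margR_pos hω xm'.1
  have hpc := pushCo_pos (margL_pos hω) hc y
  have hpd := pushCo_pos (margR_pos hω) hd y'
  have hP := pushTensor_pos hω hc hd y y'
  have hωxx := hω (xm.1, xm'.1)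
  have hcxm := hc xm.1 (xm.2, y)
  have hdxm := hd xm'.1 (xm'.2, y')
  rw [← log_mul (by positivity) (by positivity)]
  congr 1
  simp only [exactInv]
  field_simp

end Channels

theorem relEnt_laxator_general
    {X X' M M' Y Y' : Type*}
    [Fintype X] [Fintype X'] [Fintype M] [Fintype M'] [Fintype Y] [Fintype Y']
    (ω : X × X' → ℝ) (c : X → M × Y → ℝ) (d : X' → M' × Y' → ℝ)
    (c' : Y → X × M → ℝ) (d' : Y' → X' × M' → ℝ)
    (hω : ∀ p, 0 < ω p)
    (hc : ∀ x my, 0 < c x my)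
    (hd : ∀ x' my, 0 < d x' my)
    (hc'₁ : ∀ y, ∑ xm, c' y xm = 1)
    (hd'₁ : ∀ y', ∑ xm, d' y' xm = 1) :
    ∀ (y : Y) (y' : Y'),
      relEnt
          (fun p : (X × M) × (X' × M') => c' y p.1 * d' y' p.2)
          (fun p : (X × M) × (X' × M') =>
            ω (p.1.1, p.2.1) * c p.1.1 (p.1.2, y) * d p.2.1 (p.2.2, y')
              / pushTensor ω c d y y')
        = relEnt (c' y) (exactInv (margL ω) c y)
          + relEnt (d' y') (exactInv (margR ω) d y')
          + ((∑ x, ∑ m, ∑ x', ∑ m',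
                c' y (x, m) * d' y' (x', m')
                  * Real.log (margL ω x * margR ω x' / ω (x, x')))
             + Real.log (pushTensor ω c d y y'
                  / (pushCo (margL ω) c y * pushCo (margR ω) d y'))) := by
  intro y y'
  obtain ⟨_, _⟩ := nonempty_prod.mp (nonempty_of_sum_eq_one_s9 (hc'₁ y))
  obtain ⟨_, _⟩ := nonempty_prod.mp (nonempty_of_sum_eq_one_s9 (hd'₁ y'))
  rw [relEnt_prod_eq_add (hc'₁ y) (hd'₁ y')
    (fun _ => (div_pos (mul_pos (mul_pos (hω _) (hc _ _)) (hd _ _))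
      (pushTensor_pos hω hc hd y y')).ne')
    (fun _ => (exactInv_pos (margL_pos hω) hc y _).ne')
    (fun _ => (exactInv_pos (margR_pos hω) hd y' _).ne')]
  congr 1
  simp only [log_exactInv_mul_exactInv_div hω hc hd, mul_add, sum_add_distrib, ← sum_mul,
    sum_prod_mul_of_sum_eq_one (hc'₁ y) (hd'₁ y'), one_mul]
  simp only [Fintype.sum_prod_type, sum_mul]

/-- **Laxator of the relative entropy loss model**: the divergence of the product of
the approximate inverses from the exact inversion of the tensor channel equals the
sum of the componentwise divergences (at the marginal priors) plus the stated
laxity term `λ`. -/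
theorem relEnt_laxator
    {X X' M M' Y Y' : Type*}
    [Fintype X] [Fintype X'] [Fintype M] [Fintype M'] [Fintype Y] [Fintype Y']
    (ω : X × X' → ℝ) (c : X → M × Y → ℝ) (d : X' → M' × Y' → ℝ)
    (c' : Y → X × M → ℝ) (d' : Y' → X' × M' → ℝ)
    (hω : ∀ p, 0 < ω p) (hω₁ : ∑ p, ω p = 1)
    (hc : ∀ x my, 0 < c x my) (hc₁ : ∀ x, ∑ my, c x my = 1)
    (hd : ∀ x' my, 0 < d x' my) (hd₁ : ∀ x', ∑ my, d x' my = 1)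
    (hc'₀ : ∀ y xm, 0 ≤ c' y xm) (hc'₁ : ∀ y, ∑ xm, c' y xm = 1)
    (hd'₀ : ∀ y' xm, 0 ≤ d' y' xm) (hd'₁ : ∀ y', ∑ xm, d' y' xm = 1) :
    ∀ (y : Y) (y' : Y'),
      relEnt
          (fun p : (X × M) × (X' × M') => c' y p.1 * d' y' p.2)
          (fun p : (X × M) × (X' × M') =>
            ω (p.1.1, p.2.1) * c p.1.1 (p.1.2, y) * d p.2.1 (p.2.2, y')
              / pushTensor ω c d y y')
        = relEnt (c' y) (exactInv (margL ω) c y)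
          + relEnt (d' y') (exactInv (margR ω) d y')
          + ((∑ x, ∑ m, ∑ x', ∑ m',
                c' y (x, m) * d' y' (x', m')
                  * Real.log (margL ω x * margR ω x' / ω (x, x')))
             + Real.log (pushTensor ω c d y y'
                  / (pushCo (margL ω) c y * pushCo (margR ω) d y'))) :=
  relEnt_laxator_general ω c d c' d' hω hc hd hc'₁ hd'₁
end
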